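/- Let (M,d) be a metric space and S, T: M → M mappings satisfying property (E.A.) such that the pair (S,T) is a ψ-(α,β,γ)-contraction pair. If T(M) is a closed subset of M, then S and T have a unique point of coincidence; that is, there exist u ∈ M and z ∈ M with Su = Tu = z, and whenever Sv = Tv = w for some v ∈ M one has w = z. -/

import Mathlib

open Filter Set Topology

/-- An altering distance function `ψ : [0,∞) → [0,∞)`, modeled as a function on `ℝ`
whose relevant properties are stated on `[0,∞)`. -/
def AlteringDistance (ψ : ℝ → ℝ) : Prop :=
  (∀ t, 0 ≤ t → 0 ≤ ψ t) ∧
  (∀ t, 0 ≤ t → (ψ t = 0 ↔ t = 0)) ∧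
  MonotoneOn ψ (Set.Ici 0) ∧
  ContinuousOn ψ (Set.Ici 0)

/-- Condition (*) on the contractive parameter functions `α, β, γ : [0,∞) → [0,1)`:
`α(t)+β(t)+γ(t) < 1` for all `t ≥ 0`, `limsup_{s→0⁺} γ(s) < 1`, and
`limsup_{s→t⁺} (α(s)+β(s))/(1-γ(s)) < 1` for every `t > 0`. -/
def ParamCondition (α β γ : ℝ → ℝ) : Prop :=
  (∀ t, 0 ≤ t → 0 ≤ α t ∧ α t < 1) ∧
  (∀ t, 0 ≤ t → 0 ≤ β t ∧ β t < 1) ∧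
  (∀ t, 0 ≤ t → 0 ≤ γ t ∧ γ t < 1) ∧
  (∀ t, 0 ≤ t → α t + β t + γ t < 1) ∧
  Filter.limsup γ (𝓝[>] (0:ℝ)) < 1 ∧
  (∀ t : ℝ, 0 < t →
    Filter.limsup (fun s => (α s + β s) / (1 - γ s)) (𝓝[>] t) < 1)

/-- The pair `(S,T)` is a `ψ-(α,β,γ)`-contraction pair. -/
def ContractionPair {M : Type*} [MetricSpace M] (S T : M → M)
    (ψ α β γ : ℝ → ℝ) : Prop :=
  AlteringDistance ψ ∧ ParamCondition α β γ ∧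
  ∀ x y : M,
    ψ (dist (S x) (S y)) ≤
      α (dist (T x) (T y)) * ψ (dist (T x) (T y)) +
      β (dist (T x) (T y)) * ψ (dist (S x) (T x)) +
      γ (dist (T x) (T y)) * ψ (dist (S y) (T y))

/-
Since `T(M)` is closed, the common limit of `S xₙ` and `T xₙ` is `T u` for some `u`. Apply the
contraction inequality to `(xₙ, u)`: as `n → ∞` the terms in `d(T xₙ, T u)` and `d(S xₙ, T xₙ)`
vanish, while `γ(d(T xₙ, T u))` eventually stays below some `c < 1`: the distances tend to `0`
within `[0, ∞)`, and both `γ(0)` and `limsup_{s→0⁺} γ(s)` are `< 1`.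
In the limit `ψ(d(Su, Tu)) ≤ c ψ(d(Su, Tu))`, so `Su = Tu`. For two points of coincidence
`z, w` the inequality reads `ψ(d(z, w)) ≤ α(d(z, w)) ψ(d(z, w))`, so `z = w`.
-/

theorem eventually_nhdsGE_lt_of_limsup_lt {X Y : Type*} [TopologicalSpace X] [LinearOrder X]
    [ConditionallyCompleteLinearOrder Y] {f : X → Y} {a : X} {c : Y}
    (hbdd : IsBoundedUnder (· ≤ ·) (𝓝[>] a) f) (hlim : limsup f (𝓝[>] a) < c) (ha : f a < c) :
    ∀ᶠ s in 𝓝[≥] a, f s < c := by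
  rw [← nhdsGT_sup_nhdsWithin_singleton, nhdsWithin_singleton]
  exact ⟨eventually_lt_of_limsup_lt hlim hbdd, ha⟩

namespace AlteringDistance

variable {ψ : ℝ → ℝ}

theorem map_zero (hψ : AlteringDistance ψ) : ψ 0 = 0 :=
  (hψ.2.1 0 le_rfl).mpr rfl

theorem eq_zero_of_le_mul (hψ : AlteringDistance ψ) {t c : ℝ} (ht : 0 ≤ t) (hc : c < 1)
    (hle : ψ t ≤ c * ψ t) : t = 0 := by
  have hψt : 0 ≤ ψ t := hψ.1 t ht
  exact (hψ.2.1 t ht).mp (by nlinarith)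

theorem tendsto_comp (hψ : AlteringDistance ψ) {ι : Type*} {l : Filter ι} [l.NeBot]
    {f : ι → ℝ} {a : ℝ}
    (hf : Tendsto f l (𝓝 a)) (hf_nonneg : ∀ i, 0 ≤ f i) :
    Tendsto (fun i => ψ (f i)) l (𝓝 (ψ a)) := by
  have ha : 0 ≤ a := ge_of_tendsto' hf hf_nonneg
  exact (hψ.2.2.2 a ha).tendsto.comp
    (tendsto_nhdsWithin_of_tendsto_nhds_of_eventually_within _ hf (.of_forall hf_nonneg))

end AlteringDistance

theorem ParamCondition.exists_eventually_nhdsGE_lt {α β γ : ℝ → ℝ} (h : ParamCondition α β γ) :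
    ∃ c < 1, ∀ᶠ s in 𝓝[≥] 0, γ s < c := by
  obtain ⟨-, -, hγ, -, hγ0, -⟩ := h
  have hbdd : IsBoundedUnder (· ≤ ·) (𝓝[>] (0 : ℝ)) γ :=
    isBoundedUnder_of_eventually_le (a := 1)
      (eventually_nhdsWithin_of_forall fun s hs => (hγ s (le_of_lt hs)).2.le)
  set m := max (limsup γ (𝓝[>] (0 : ℝ))) (γ 0)
  have hm : m < 1 := max_lt hγ0 (hγ 0 le_rfl).2
  refine ⟨(m + 1) / 2, by linarith, eventually_nhdsGE_lt_of_limsup_lt hbdd ?_ ?_⟩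
  · linarith [le_max_left (limsup γ (𝓝[>] (0 : ℝ))) (γ 0)]
  · linarith [le_max_right (limsup γ (𝓝[>] (0 : ℝ))) (γ 0)]

namespace ContractionPair

variable {M : Type*} [MetricSpace M] {S T : M → M} {ψ α β γ : ℝ → ℝ}

theorem le_add_add_mul (h : ContractionPair S T ψ α β γ) (x y : M) :
    ψ (dist (S x) (S y)) ≤
      ψ (dist (T x) (T y)) + ψ (dist (S x) (T x)) +
        γ (dist (T x) (T y)) * ψ (dist (S y) (T y)) := by
  obtain ⟨hψ, ⟨hα, hβ, -⟩, hC⟩ := h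
  have hαψ := mul_le_of_le_one_left (hψ.1 (dist (T x) (T y)) dist_nonneg)
    (hα (dist (T x) (T y)) dist_nonneg).2.le
  have hβψ := mul_le_of_le_one_left (hψ.1 (dist (S x) (T x)) dist_nonneg)
    (hβ (dist (T x) (T y)) dist_nonneg).2.le
  linarith [hC x y]

theorem eq_of_coincidence (h : ContractionPair S T ψ α β γ) {u v : M}
    (hu : S u = T u) (hv : S v = T v) : S u = S v := by
  obtain ⟨hψ, ⟨hα, -⟩, hC⟩ := h
  have hle := hC u v
  rw [← hu, ← hv] at hle
  simp only [dist_self, hψ.map_zero, mul_zero, add_zero] at hle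
  exact dist_eq_zero.mp
    (hψ.eq_zero_of_le_mul dist_nonneg (hα (dist (S u) (S v)) dist_nonneg).2 hle)

theorem coincidence_of_tendsto (h : ContractionPair S T ψ α β γ) {ι : Type*} {l : Filter ι}
    [l.NeBot] {x : ι → M} {u : M} (hSx : Tendsto (fun n => S (x n)) l (𝓝 (T u)))
    (hTx : Tendsto (fun n => T (x n)) l (𝓝 (T u))) : S u = T u := by
  obtain ⟨c, hc, hγc⟩ := h.2.1.exists_eventually_nhdsGE_lt
  have hψ := h.1
  have hTxu : Tendsto (fun n => dist (T (x n)) (T u)) l (𝓝 0) := by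
    simpa using hTx.dist (tendsto_const_nhds (x := T u))
  have hSTx : Tendsto (fun n => dist (S (x n)) (T (x n))) l (𝓝 0) := by
    simpa using hSx.dist hTx
  have hSxu : Tendsto (fun n => dist (S (x n)) (S u)) l (𝓝 (dist (T u) (S u))) :=
    hSx.dist tendsto_const_nhds
  have hγn : ∀ᶠ n in l, γ (dist (T (x n)) (T u)) ≤ c :=
    (tendsto_nhdsWithin_of_tendsto_nhds_of_eventually_within _ hTxu
      (.of_forall fun _ => dist_nonneg)).eventually (hγc.mono fun _ => le_of_lt)
  have hbound : ∀ᶠ n in l, ψ (dist (S (x n)) (S u)) ≤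
      ψ (dist (T (x n)) (T u)) + ψ (dist (S (x n)) (T (x n))) + c * ψ (dist (S u) (T u)) := by
    filter_upwards [hγn] with n hn
    have := mul_le_mul_of_nonneg_right hn (hψ.1 _ (dist_nonneg (x := S u) (y := T u)))
    linarith [h.le_add_add_mul (x n) u]
  have hlim := le_of_tendsto_of_tendsto (hψ.tendsto_comp hSxu fun _ => dist_nonneg)
    (((hψ.tendsto_comp hTxu fun _ => dist_nonneg).add
      (hψ.tendsto_comp hSTx fun _ => dist_nonneg)).add tendsto_const_nhds) hbound
  rw [hψ.map_zero, dist_comm, zero_add, zero_add] at hlim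
  exact dist_eq_zero.mp (hψ.eq_zero_of_le_mul dist_nonneg hc hlim)

end ContractionPair

/-- If `(S,T)` satisfies property (E.A.), is a `ψ-(α,β,γ)`-contraction pair, and `T(M)` is
closed, then `S` and `T` have a unique point of coincidence. -/
theorem exists_unique_poc_of_EA {M : Type*} [MetricSpace M] (S T : M → M)
    (ψ α β γ : ℝ → ℝ)
    (hEA : ∃ (x : ℕ → M) (t : M),
      Tendsto (fun n => S (x n)) atTop (𝓝 t) ∧ Tendsto (fun n => T (x n)) atTop (𝓝 t))
    (hST : ContractionPair S T ψ α β γ)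
    (hclosed : IsClosed (Set.range T)) :
    ∃ u z : M, S u = z ∧ T u = z ∧
      ∀ v w : M, S v = w → T v = w → w = z := by
  obtain ⟨x, t, hSx, hTx⟩ := hEA
  obtain ⟨u, rfl⟩ : t ∈ range T :=
    hclosed.mem_of_tendsto hTx (.of_forall fun n => mem_range_self _)
  have hu : S u = T u := hST.coincidence_of_tendsto hSx hTx
  refine ⟨u, S u, rfl, hu.symm, ?_⟩
  rintro v w rfl hv
  exact (hST.eq_of_coincidence hu hv.symm).symm
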